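/- For every ρ with 0 < ρ < π, the image of the full parametrization domain (−π, π] × [−π/2, π/2] under the map S_ρ(u, v) = γ_{u,v}(ρ) is a subset of ℝ³ homeomorphic to the standard unit 2-sphere; in particular the geodesic sphere of radius ρ in S²×ℝ is a simply connected closed surface (Proposition 2.3). -/

import Mathlib

/-!
`S_ρ` factors through the spherical coordinates `(u, v) ↦ (sin v, cos v cos u, cos v sin u)`,
which map the parameter domain onto the unit sphere, followed by the continuous map
`G(x, y, z) = e^{ρx} (cos ρr, (sin ρr / r) y, (sin ρr / r) z)` with `r = √(1 - x²)`.
For `0 < ρ < π`, `G` is injective on the sphere: `‖G p‖ = e^{ρx}` recovers `x`, hence `r`,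
and `sin ρr / r > 0` then recovers `y` and `z`. A continuous injection of the compact sphere
into `ℝ³` is a homeomorphism onto its image.
-/

open Real

/-- The geodesic curves of `S² × ℝ` starting at `(1,0,0)` in the Euclidean model,
with longitude `u`, altitude `v` and arc-length parameter `τ` (equation (2.2)). -/
noncomputable def geo (u v τ : ℝ) : EuclideanSpace ℝ (Fin 3) :=
  (WithLp.equiv 2 (Fin 3 → ℝ)).symm
    ![Real.exp (τ * Real.sin v) * Real.cos (τ * Real.cos v),
      Real.exp (τ * Real.sin v) * Real.sin (τ * Real.cos v) * Real.cos u,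
      Real.exp (τ * Real.sin v) * Real.sin (τ * Real.cos v) * Real.sin u]

noncomputable def IsCompact.homeomorphImageOfInjOn {X Y : Type*} [TopologicalSpace X]
    [TopologicalSpace Y] [T2Space Y] {s : Set X} (hs : IsCompact s) {f : X → Y}
    (hf : ContinuousOn f s) (hinj : Set.InjOn f s) : s ≃ₜ f '' s :=
  haveI := isCompact_iff_compactSpace.mp hs
  Continuous.homeoOfEquivCompactToT2 (f := Equiv.Set.imageOfInjOn f s hinj)
    (hf.domRestrict.subtype_mk _)

namespace Real

theorem mul_sinc (x : ℝ) : x * sinc x = sin x := by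
  rcases eq_or_ne x 0 with rfl | hx
  · simp
  · rw [sinc_of_ne_zero hx, mul_div_cancel₀ _ hx]

theorem sinc_pos_of_mem_Ico {x : ℝ} (hx : x ∈ Set.Ico 0 π) : 0 < sinc x := by
  rcases hx.1.eq_or_lt with rfl | hx0
  · simp
  · rw [sinc_of_ne_zero hx0.ne']
    exact div_pos (sin_pos_of_pos_of_lt_pi hx0 hx.2) hx0

end Real

open Set Metric

local notation "ℝ³" => EuclideanSpace ℝ (Fin 3)

theorem mem_sphere_zero_one_iff_sq_add_sq_add_sq {p : ℝ³} :
    p ∈ sphere (0 : ℝ³) 1 ↔ p 0 ^ 2 + p 1 ^ 2 + p 2 ^ 2 = 1 := by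
  rw [mem_sphere_zero_iff_norm, EuclideanSpace.norm_eq, sqrt_eq_one]
  simp [Fin.sum_univ_three]

noncomputable def sphericalCoords (u v : ℝ) : ℝ³ := !₂[sin v, cos v * cos u, cos v * sin u]

theorem image_sphericalCoords :
    (fun p : ℝ × ℝ => sphericalCoords p.1 p.2) '' (Ioc (-π) π ×ˢ Icc (-(π / 2)) (π / 2)) =
      sphere 0 1 := by
  apply (image_subset_iff.2 fun p _ => ?_).antisymm fun q hq => ?_
  · simp only [mem_preimage, mem_sphere_zero_one_iff_sq_add_sq_add_sq, sphericalCoords,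
      Matrix.cons_val_zero, Matrix.cons_val_one, Matrix.cons_val]
    linear_combination sin_sq_add_cos_sq p.2 + cos p.2 ^ 2 * sin_sq_add_cos_sq p.1
  · have hq := mem_sphere_zero_one_iff_sq_add_sq_add_sq.1 hq
    have hq0 : |q 0| ≤ 1 := (sq_le_one_iff_abs_le_one _).1 (by nlinarith)
    set z : ℂ := ⟨q 1, q 2⟩
    have hz : ‖z‖ = cos (arcsin (q 0)) := by
      rw [cos_arcsin, Complex.norm_def, Complex.normSq_mk]
      congr 1
      linarith
    refine ⟨(z.arg, arcsin (q 0)), ⟨Complex.arg_mem_Ioc z, arcsin_mem_Icc _⟩, ?_⟩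
    ext i
    fin_cases i
    · simp [sphericalCoords, sin_arcsin (abs_le.1 hq0).1 (abs_le.1 hq0).2]
    · simp [sphericalCoords, ← hz, Complex.norm_mul_cos_arg z]; rfl
    · simp [sphericalCoords, ← hz, Complex.norm_mul_sin_arg z]; rfl

/-- `S_ρ` factored through `sphericalCoords`; `sinc` keeps it continuous at the poles, where
`√(1 - p 0 ^ 2)` vanishes. -/
noncomputable def geodesicSphereMap (ρ : ℝ) (p : ℝ³) : ℝ³ :=
  exp (ρ * p 0) • !₂[cos (ρ * √(1 - p 0 ^ 2)), ρ * sinc (ρ * √(1 - p 0 ^ 2)) * p 1,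
    ρ * sinc (ρ * √(1 - p 0 ^ 2)) * p 2]

theorem continuous_geodesicSphereMap (ρ : ℝ) : Continuous (geodesicSphereMap ρ) := by
  unfold geodesicSphereMap
  have := Real.continuous_sinc
  fun_prop

theorem geodesicSphereMap_sphericalCoords (ρ u : ℝ) {v : ℝ} (hv : v ∈ Icc (-(π / 2)) (π / 2)) :
    geodesicSphereMap ρ (sphericalCoords u v) = geo u v ρ := by
  have hr : √(1 - sin v ^ 2) = cos v := by
    rw [← cos_sq', sqrt_sq (cos_nonneg_of_mem_Icc hv)]
  ext i
  fin_cases i <;> simp [geodesicSphereMap, sphericalCoords, geo, hr, ← mul_sinc (ρ * cos v)] <;> ring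

theorem norm_geodesicSphereMap (ρ : ℝ) {p : ℝ³} (hp : p ∈ sphere (0 : ℝ³) 1) :
    ‖geodesicSphereMap ρ p‖ = exp (ρ * p 0) := by
  have hp := mem_sphere_zero_one_iff_sq_add_sq_add_sq.1 hp
  have hr : √(1 - p 0 ^ 2) ^ 2 = p 1 ^ 2 + p 2 ^ 2 := by
    rw [sq_sqrt (by nlinarith)]; linarith
  rw [geodesicSphereMap, norm_smul, norm_of_nonneg (exp_pos _).le, mul_eq_left₀ (exp_pos _).ne',
    EuclideanSpace.norm_eq, sqrt_eq_one]
  simp only [norm_eq_abs, sq_abs, Fin.sum_univ_three, Matrix.cons_val_zero, Matrix.cons_val_one,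
    mul_pow, Matrix.cons_val]
  set x := ρ * √(1 - p 0 ^ 2)
  linear_combination sin_sq_add_cos_sq x - ρ ^ 2 * sinc x ^ 2 * hr + (x * sinc x + sin x) * mul_sinc x

theorem injOn_geodesicSphereMap {ρ : ℝ} (h0 : 0 < ρ) (hπ : ρ < π) :
    InjOn (geodesicSphereMap ρ) (sphere 0 1) := by
  intro p hp q hq hpq
  have hx : p 0 = q 0 := by
    have h := congrArg norm hpq
    rw [norm_geodesicSphereMap ρ hp, norm_geodesicSphereMap ρ hq, exp_eq_exp] at h
    exact mul_left_cancel₀ h0.ne' h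
  have hr : ρ * √(1 - q 0 ^ 2) < π :=
    (mul_le_of_le_one_right h0.le (sqrt_le_one.2 (by nlinarith))).trans_lt hπ
  have hs : sinc (ρ * √(1 - q 0 ^ 2)) ≠ 0 := (sinc_pos_of_mem_Ico ⟨by positivity, hr⟩).ne'
  ext i
  fin_cases i
  · exact hx
  · simpa [geodesicSphereMap, hx, h0.ne', hs] using congrArg (· 1) hpq
  · simpa [geodesicSphereMap, hx, h0.ne', hs] using congrArg (· 2) hpq

theorem image_geo_eq_image_geodesicSphereMap (ρ : ℝ) :
    (fun p : ℝ × ℝ => geo p.1 p.2 ρ) '' (Ioc (-π) π ×ˢ Icc (-(π / 2)) (π / 2)) =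
      geodesicSphereMap ρ '' sphere 0 1 := by
  rw [← image_sphericalCoords, image_image]
  exact image_congr fun p hp => (geodesicSphereMap_sphericalCoords ρ p.1 hp.2).symm

theorem sphere_homeomorph (ρ : ℝ) (h0 : 0 < ρ) (hπ : ρ < π) :
    Nonempty
      (((fun p : ℝ × ℝ => geo p.1 p.2 ρ) ''
          (Set.Ioc (-π) π ×ˢ Set.Icc (-(π / 2)) (π / 2)) : Set (EuclideanSpace ℝ (Fin 3))) ≃ₜ
        (Metric.sphere (0 : EuclideanSpace ℝ (Fin 3)) 1)) :=
  ⟨(Homeomorph.setCongr (image_geo_eq_image_geodesicSphereMap ρ)).trans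
    ((isCompact_sphere 0 1).homeomorphImageOfInjOn
      (continuous_geodesicSphereMap ρ).continuousOn (injOn_geodesicSphereMap h0 hπ)).symm⟩
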